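/- Let p be an odd prime with K(m) ≢ 0 (mod p) for all m ≥ p. Then the number of positive integers n with p | K(n) is at most ⌊(p-1)/4⌋. -/

import Mathlib

/-- Kurepa's left factorial. -/
def K (n : ℕ) : ℕ := ∑ k ∈ Finset.range n, k.factorial

/-!
Below `p` the indices `n` with `p ∣ K n` are at least `4` apart: for `1 ≤ k ≤ 3`,
`K (m + k) - K m = m! * (m + 2) ^ (k - 1)`, which a prime `p > m + k` cannot divide.
Since `K 1, K 2, K 3` are powers of two, all these indices lie in `[4, p - 1]`, so
`n ↦ n / 4` maps them injectively into `[1, (p - 1) / 4]`.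
-/

open Nat

theorem Set.ncard_le_div_of_forall_add_le {S : Set ℕ} {d N : ℕ} (hd : 0 < d)
    (hS : ∀ n ∈ S, d ≤ n ∧ n ≤ N) (hsep : ∀ m ∈ S, ∀ n ∈ S, m < n → m + d ≤ n) :
    S.ncard ≤ N / d := by
  have hmono : StrictMonoOn (· / d) S := fun m hm n hn hmn =>
    calc m / d < m / d + 1 := Nat.lt_succ_self _
      _ = (m + d) / d := (Nat.add_div_right m hd).symm
      _ ≤ n / d := Nat.div_le_div_right (hsep m hm n hn hmn)
  have hmaps : (· / d) '' S ⊆ ↑(Finset.Icc 1 (N / d)) := by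
    rintro _ ⟨n, hn, rfl⟩
    simp only [Finset.coe_Icc, Set.mem_Icc]
    exact ⟨(Nat.one_le_div_iff hd).2 (hS n hn).1, Nat.div_le_div_right (hS n hn).2⟩
  calc S.ncard = ((· / d) '' S).ncard := hmono.injOn.ncard_image.symm
    _ ≤ (Finset.Icc 1 (N / d) : Set ℕ).ncard := Set.ncard_le_ncard hmaps
    _ = N / d := by rw [Set.ncard_coe_finset, Nat.card_Icc, Nat.add_sub_cancel]

theorem K_succ (n : ℕ) : K (n + 1) = K n + n ! := Finset.sum_range_succ _ _

theorem K_add_of_le_three {m k : ℕ} (hk0 : 0 < k) (hk : k ≤ 3) :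
    K (m + k) = K m + m ! * (m + 2) ^ (k - 1) := by
  interval_cases k <;> simp only [K_succ, factorial_succ] <;> ring

theorem Nat.Prime.not_dvd_K_add_of_dvd_K {p m k : ℕ} (hp : p.Prime) (hk0 : 0 < k) (hk : k ≤ 3)
    (hmk : m + k < p) (hm : p ∣ K m) : ¬ p ∣ K (m + k) := by
  rw [K_add_of_le_three hk0 hk]
  intro hdvd
  rcases hp.dvd_mul.1 ((Nat.dvd_add_right hm).1 hdvd) with hfact | hpow
  · exact absurd (hp.dvd_factorial.1 hfact) (by omega)
  · obtain rfl | hk2 : k = 1 ∨ 2 ≤ k := by omega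
    · exact hp.one_lt.ne' (Nat.dvd_one.1 hpow)
    · exact absurd (Nat.le_of_dvd (by omega) (hp.dvd_of_dvd_pow hpow)) (by omega)

theorem Odd.not_dvd_K {p n : ℕ} (hodd : Odd p) (hp : p.Prime) (hn0 : 0 < n) (hn : n ≤ 3) :
    ¬ p ∣ K n := by
  have hK : K n = 2 ^ (n - 1) := by interval_cases n <;> decide
  rw [hK]
  intro hdvd
  rw [(Nat.prime_dvd_prime_iff_eq hp prime_two).1 (hp.dvd_of_dvd_pow hdvd)] at hodd
  exact Nat.not_odd_iff_even.2 even_two hodd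

theorem kurepa_index_bound (p : ℕ) (hp : p.Prime) (hodd : Odd p)
    (h : ∀ m, p ≤ m → ¬ p ∣ K m) :
    {n : ℕ | 0 < n ∧ p ∣ K n}.ncard ≤ (p - 1) / 4 := by
  have hlt : ∀ n, p ∣ K n → n < p := fun n hn => lt_of_not_ge fun hle => h n hle hn
  apply Set.ncard_le_div_of_forall_add_le four_pos
  · rintro n ⟨hn0, hn⟩
    have : ¬ n ≤ 3 := fun hn3 => hodd.not_dvd_K hp hn0 hn3 hn
    have := hlt n hn
    omega
  · rintro m ⟨-, hm⟩ n ⟨-, hn⟩ hmn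
    by_contra! hnear
    obtain ⟨k, rfl⟩ := Nat.exists_eq_add_of_le hmn.le
    exact hp.not_dvd_K_add_of_dvd_K (by omega) (by omega) (hlt _ hn) hm hn
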